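/- arXiv:1902.03852 — 2 statements merged into one kernel-verified Lean document; each statement's English description precedes it below -/
import Mathlib

section
/- Let f ∈ n RI^fin_A and let P ⊆ Dom(f) be a finite set. Then: (1) f(P) is a joinless code iff P is a joinless code; (2) if P is a joinless code, then P is maximal as a joinless code iff f(P) is maximal as a joinless code. -/
namespace BrinThompson

abbrev W (A : Type*) (n : ℕ) : Type _ := Fin n → List A

variable {A : Type*} {n : ℕ}

/-- Coordinatewise concatenation in `nA*`. -/
def cat (u x : W A n) : W A n := fun i => u i ++ x i

/-- `u ≤_init v` : `u` is an initial factor of `v`. -/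
def initLE (u v : W A n) : Prop := ∃ x : W A n, v = cat u x

/-- `w` is the join (least upper bound) of `u` and `v` w.r.t. `≤_init`. -/
def isJoin (u v w : W A n) : Prop :=
  initLE u w ∧ initLE v w ∧ ∀ z : W A n, initLE u z → initLE v z → initLE w z

/-- `u` and `v` have a join. -/
def HasJoin (u v : W A n) : Prop := ∃ w : W A n, isJoin u v w

/-- A joinless code: no two distinct elements have a join. -/
def JoinlessCode (S : Set (W A n)) : Prop :=
  ∀ u ∈ S, ∀ v ∈ S, u ≠ v → ¬ HasJoin u v

/-- A maximal joinless code: joinless, and every element of `nA*` has a join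
with some element of the code. -/
def MaxJoinlessCode (S : Set (W A n)) : Prop :=
  JoinlessCode S ∧ ∀ x : W A n, ∃ p ∈ S, HasJoin x p

/-- The right ideal `C · nA*` generated by `C`. -/
def genIdeal (C : Set (W A n)) : Set (W A n) := {w | ∃ c ∈ C, ∃ x : W A n, w = cat c x}

def IsRightIdeal (R : Set (W A n)) : Prop := genIdeal R = R

/-- An initial factor code: pairwise `≤_init`-incomparable set. -/
def InitFactorCode (S : Set (W A n)) : Prop :=
  ∀ u ∈ S, ∀ v ∈ S, initLE u v → u = v

/-- `A_{ε,n}`: tuples with one coordinate a single letter and the rest empty. -/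
def Aeps (A : Type*) (n : ℕ) : Set (W A n) :=
  {w | ∃ i : Fin n, ∃ a : A, w i = [a] ∧ ∀ j : Fin n, j ≠ i → w j = []}

/-- `(ε)^n`, the tuple of empty strings. -/
def epsn (A : Type*) (n : ℕ) : W A n := fun _ => []

/-- `nA^ω`: `n`-tuples of one-sided infinite sequences over `A`. -/
abbrev Winf (A : Type*) (n : ℕ) : Type _ := Fin n → ℕ → A

/-- Concatenation of a finite tuple `p ∈ nA*` with an infinite tuple `u ∈ nA^ω`. -/
def catInf (p : W A n) (u : Winf A n) : Winf A n :=
  fun i k => if h : k < (p i).length then (p i).get ⟨k, h⟩ else u i (k - (p i).length)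

/-- `v` is an interior vertex of the `P`-dag: a strict initial factor of
some element of `P`. -/
def Interior (P : Set (W A n)) (v : W A n) : Prop := ∃ p ∈ P, initLE v p ∧ v ≠ p

/-- The child of `v` in direction `i`, extended by letter `a`. -/
def child (v : W A n) (i : Fin n) (a : A) : W A n := Function.update v i (v i ++ [a])

/-- A leaf of the interior dag of `P`: an interior vertex none of whose
children is interior. -/
def InteriorLeaf (P : Set (W A n)) (v : W A n) : Prop :=
  Interior P v ∧ ∀ (i : Fin n) (a : A), ¬ Interior P (child v i a)

/-- `v_+ = (v · A_{ε,n}) ∩ P`, the set of children of `v` belonging to `P`. -/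
def vplus (P : Set (W A n)) (v : W A n) : Set (W A n) :=
  {w | (∃ (i : Fin n) (a : A), w = child v i a) ∧ w ∈ P}

/-- The depth of a vertex: the sum of the coordinate lengths. -/
def depth (v : W A n) : ℕ := ∑ i, (v i).length

/-- One-step restriction of `P` at `(p, i)`. -/
def oneStep (P : Set (W A n)) (p : W A n) (i : Fin n) : Set (W A n) :=
  (P \ {p}) ∪ {w | ∃ a : A, w = child p i a}

/-- One step in a sequence of one-step restrictions. -/
def RestrStep (P Q : Set (W A n)) : Prop := ∃ p ∈ P, ∃ i : Fin n, Q = oneStep P p i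

/-- The box code `A^{k_1} × … × A^{k_n}`. -/
def box (A : Type*) {n : ℕ} (k : Fin n → ℕ) : Set (W A n) :=
  {w | ∀ i : Fin n, (w i).length = k i}

/-- Elementwise join `P ∨ Q` of two sets, ranging over the joins that exist. -/
def setJoin (P Q : Set (W A n)) : Set (W A n) :=
  {w | ∃ p ∈ P, ∃ q ∈ Q, isJoin p q w}

/-- `ℓ(S)`: the maximum coordinate length occurring in `S`. -/
noncomputable def ell (S : Set (W A n)) : ℕ :=
  sSup {m | ∃ z ∈ S, ∃ i : Fin n, (z i).length = m}

/-- An element of `n RI^fin_A`: an injective right ideal morphism of `nA*`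
whose domain code and image code are finite maximal joinless codes.
`toFun` is a total function whose values outside `Dom` are irrelevant. -/
structure RIMfin (A : Type*) (n : ℕ) where
  Dom : Set (W A n)
  toFun : W A n → W A n
  domC : Set (W A n)
  imC : Set (W A n)
  ideal : IsRightIdeal Dom
  morph : ∀ x ∈ Dom, ∀ w : W A n, toFun (cat x w) = cat (toFun x) w
  inj : Set.InjOn toFun Dom
  domC_gen : genIdeal domC = Dom
  imC_gen : genIdeal imC = toFun '' Dom
  domC_fin : domC.Finite
  domC_max : MaxJoinlessCode domC
  imC_fin : imC.Finite
  imC_max : MaxJoinlessCode imC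

/-- `ℓ(f) = max{ℓ(z) : z ∈ domC(f) ∪ imC(f)}`. -/
noncomputable def ellF (F : RIMfin A n) : ℕ := ell (F.domC ∪ F.imC)

/-- `G` extends `F` (as partial functions). -/
def Extends (F G : RIMfin A n) : Prop :=
  F.Dom ⊆ G.Dom ∧ ∀ x ∈ F.Dom, G.toFun x = F.toFun x

/-- `F` and `G` are equal as partial functions. -/
def EquivRIM (F G : RIMfin A n) : Prop :=
  F.Dom = G.Dom ∧ ∀ x ∈ F.Dom, F.toFun x = G.toFun x

/-- `G` is a maximal extension of `F` in `n RI^fin_A`. -/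
def MaxExtension (F G : RIMfin A n) : Prop :=
  Extends F G ∧ ∀ H : RIMfin A n, Extends G H → EquivRIM G H

/-! The prefix order of `nA*` is a product of trees, so two tuples have a join as soon as they
have a common upper bound. An injective right ideal morphism `f` therefore preserves and reflects
the existence of joins on its domain: a common extension `x·r = y·s` is sent to
`f(x)·r = f(y)·s`, and conversely injectivity pulls such an identity back. Since the domain and
image codes are maximal joinless codes, every tuple is an initial factor of an element of `Dom(f)`
and of an element of `Im(f)`, which transports maximality in both directions. -/

lemma initLE_iff {u v : W A n} : initLE u v ↔ ∀ i, u i <+: v i := by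
  constructor
  · rintro ⟨x, rfl⟩ i
    exact ⟨x i, rfl⟩
  · intro h
    exact ⟨fun i => (h i).choose, funext fun i => (h i).choose_spec.symm⟩

lemma initLE_cat (u x : W A n) : initLE u (cat u x) := ⟨x, rfl⟩

lemma initLE_trans {u v w : W A n} (huv : initLE u v) (hvw : initLE v w) : initLE u w := by
  rw [initLE_iff] at *
  exact fun i => (huv i).trans (hvw i)

lemma hasJoin_iff_exists_upperBound {u v : W A n} :
    HasJoin u v ↔ ∃ z, initLE u z ∧ initLE v z := by
  classical
  refine ⟨fun ⟨w, hu, hv, _⟩ => ⟨w, hu, hv⟩, fun ⟨z, hu, hv⟩ => ?_⟩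
  rw [initLE_iff] at hu hv
  -- two prefixes of `z i` are comparable; the join takes the longer one
  have hcomp (i : Fin n) : u i <+: v i ∨ v i <+: u i :=
    List.prefix_or_prefix_of_prefix (hu i) (hv i)
  refine ⟨fun i => if u i <+: v i then v i else u i, ?_, ?_, fun z' hu' hv' => ?_⟩ <;>
    rw [initLE_iff] at * <;> intro i <;> split_ifs with h
  · exact h
  · exact List.prefix_refl _
  · exact List.prefix_refl _
  · exact (hcomp i).resolve_left h
  · exact hv' i
  · exact hu' i

lemma HasJoin.of_initLE_left {x y p : W A n} (hxy : initLE x y) (h : HasJoin y p) :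
    HasJoin x p := by
  obtain ⟨z, hyz, hpz⟩ := hasJoin_iff_exists_upperBound.mp h
  exact hasJoin_iff_exists_upperBound.mpr ⟨z, initLE_trans hxy hyz, hpz⟩

lemma mem_genIdeal_of_initLE {C : Set (W A n)} {c m : W A n} (hc : c ∈ C) (h : initLE c m) :
    m ∈ genIdeal C := by
  obtain ⟨x, rfl⟩ := h
  exact ⟨c, hc, x, rfl⟩

namespace RIMfin

variable (F : RIMfin A n)

lemma cat_mem_dom {x : W A n} (hx : x ∈ F.Dom) (r : W A n) : cat x r ∈ F.Dom :=
  F.ideal ▸ mem_genIdeal_of_initLE hx (initLE_cat x r)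

lemma exists_mem_dom_initLE (x : W A n) : ∃ m ∈ F.Dom, initLE x m := by
  obtain ⟨c, hc, hxc⟩ := F.domC_max.2 x
  obtain ⟨m, hxm, hcm⟩ := hasJoin_iff_exists_upperBound.mp hxc
  exact ⟨m, F.domC_gen ▸ mem_genIdeal_of_initLE hc hcm, hxm⟩

lemma exists_mem_dom_initLE_map (y : W A n) : ∃ x ∈ F.Dom, initLE y (F.toFun x) := by
  obtain ⟨q, hq, hyq⟩ := F.imC_max.2 y
  obtain ⟨m, hym, hqm⟩ := hasJoin_iff_exists_upperBound.mp hyq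
  obtain ⟨x, hx, rfl⟩ : m ∈ F.toFun '' F.Dom := F.imC_gen ▸ mem_genIdeal_of_initLE hq hqm
  exact ⟨x, hx, hym⟩

lemma hasJoin_map_iff {x y : W A n} (hx : x ∈ F.Dom) (hy : y ∈ F.Dom) :
    HasJoin (F.toFun x) (F.toFun y) ↔ HasJoin x y := by
  simp only [hasJoin_iff_exists_upperBound]
  constructor
  · rintro ⟨_, ⟨r, rfl⟩, s, hs⟩
    have hrs : cat x r = cat y s :=
      F.inj (F.cat_mem_dom hx r) (F.cat_mem_dom hy s) (by rw [F.morph x hx, F.morph y hy, hs])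
    exact ⟨cat x r, initLE_cat x r, hrs ▸ initLE_cat y s⟩
  · rintro ⟨_, ⟨r, rfl⟩, s, hs⟩
    refine ⟨F.toFun (cat x r), ⟨r, F.morph x hx r⟩, s, ?_⟩
    rw [hs, F.morph y hy s]

variable {F} {S : Set (W A n)}

lemma joinlessCode_image_iff (hSD : S ⊆ F.Dom) :
    JoinlessCode (F.toFun '' S) ↔ JoinlessCode S := by
  simp only [JoinlessCode, Set.forall_mem_image]
  refine forall₂_congr fun u hu => forall₂_congr fun v hv => ?_
  rw [F.hasJoin_map_iff (hSD hu) (hSD hv), (F.inj.mono hSD).ne_iff hu hv]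

lemma forall_exists_hasJoin_map_iff (hSD : S ⊆ F.Dom) :
    (∀ y, ∃ p ∈ S, HasJoin y (F.toFun p)) ↔ ∀ x, ∃ p ∈ S, HasJoin x p := by
  constructor
  · intro h x
    obtain ⟨m, hm, hxm⟩ := F.exists_mem_dom_initLE x
    obtain ⟨p, hp, hmp⟩ := h (F.toFun m)
    exact ⟨p, hp, ((F.hasJoin_map_iff hm (hSD hp)).mp hmp).of_initLE_left hxm⟩
  · intro h y
    obtain ⟨x, hx, hyx⟩ := F.exists_mem_dom_initLE_map y
    obtain ⟨p, hp, hxp⟩ := h x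
    exact ⟨p, hp, ((F.hasJoin_map_iff hx (hSD hp)).mpr hxp).of_initLE_left hyx⟩

end RIMfin

theorem image_joinless_iff_general {A : Type*} {n : ℕ}
    (F : RIMfin A n) (S : Set (W A n))
    (hSD : S ⊆ F.Dom) :
    (JoinlessCode (F.toFun '' S) ↔ JoinlessCode S) ∧
    (JoinlessCode S →
      (MaxJoinlessCode S ↔ MaxJoinlessCode (F.toFun '' S))) := by
  refine ⟨RIMfin.joinlessCode_image_iff hSD, fun _ => ?_⟩
  simp only [MaxJoinlessCode, RIMfin.joinlessCode_image_iff hSD, Set.exists_mem_image,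
    RIMfin.forall_exists_hasJoin_map_iff hSD]

/-- For `f ∈ n RI^fin_A` and a finite `S ⊆ Dom(f)`: `f(S)` is joinless iff
`S` is; and for joinless `S`, `S` is maximal iff `f(S)` is maximal. -/
theorem image_joinless_iff {A : Type*} [Fintype A] [Nonempty A] {n : ℕ}
    (hn : 1 ≤ n) (F : RIMfin A n) (S : Set (W A n)) (hS : S.Finite)
    (hSD : S ⊆ F.Dom) :
    (JoinlessCode (F.toFun '' S) ↔ JoinlessCode S) ∧
    (JoinlessCode S →
      (MaxJoinlessCode S ↔ MaxJoinlessCode (F.toFun '' S))) :=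
  image_joinless_iff_general F S hSD

end BrinThompson
end

section
/- For every g ∈ V: g ∈ pFix_V(0) if and only if g∘f = f∘g for every f ∈ pFix_V(1). In words, an element g of the Thompson group V fixes pointwise all infinite binary sequences beginning with 0 if and only if g commutes with every element of V that fixes pointwise all infinite binary sequences beginning with 1. -/
/-- Concatenation of a finite binary string with an infinite binary sequence. -/
def catC (p : List Bool) (u : ℕ → Bool) : ℕ → Bool :=
  fun k => if h : k < p.length then p.get ⟨k, h⟩ else u (k - p.length)

/-- A finite maximal prefix code over `{0,1}`: a finite set of pairwise
prefix-incomparable strings such that every infinite binary sequence has a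
prefix in the set. -/
def MaxPrefixCode (P : Set (List Bool)) : Prop :=
  P.Finite ∧ (∀ p ∈ P, ∀ q ∈ P, p <+: q → p = q) ∧
  ∀ w : ℕ → Bool, ∃ p ∈ P, ∃ u : ℕ → Bool, w = catC p u

/-- Membership in the Thompson group `V`, viewed as a group of permutations
of the Cantor space `{0,1}^ω` given by tables between finite maximal prefix
codes. -/
def InV (g : (ℕ → Bool) → (ℕ → Bool)) : Prop :=
  Function.Bijective g ∧
  ∃ P Q : Set (List Bool), MaxPrefixCode P ∧ MaxPrefixCode Q ∧
    ∃ F : List Bool → List Bool, Set.BijOn F P Q ∧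
      ∀ p ∈ P, ∀ u : ℕ → Bool, g (catC p u) = catC (F p) u

/-- `g` fixes pointwise all sequences beginning with the bit `a`
(`a = false` for `pFix_V(0)`, `a = true` for `pFix_V(1)`). -/
def pFixV (a : Bool) (g : (ℕ → Bool) → (ℕ → Bool)) : Prop :=
  ∀ u : ℕ → Bool, g (catC [a] u) = catC [a] u


/-!
A bijection `g` fixing the `0`-cylinder pointwise and an `f ∈ pFix_V(1)` move disjoint sets of
points, so they commute as permutations. Conversely, if `g w m ≠ w m` for some `w` starting with
`0`, let `f ∈ pFix_V(1)` flip coordinate `m + 1` of exactly the sequences agreeing with `w` up to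
coordinate `m`. Then `f` moves `w` but fixes `g w`, so `g (f w) = f (g w) = g w` contradicts
injectivity of `g`. Such an `f` lies in `V` because it is a bijection acting only on the first
`m + 2` bits.
-/

namespace Thompson

open Function

section catC

variable {p q : List Bool} {u u' : ℕ → Bool} {k : ℕ}

lemma catC_apply_of_lt (h : k < p.length) : catC p u k = p[k] := by
  simp [catC, h]

lemma catC_apply_of_le (h : p.length ≤ k) : catC p u k = u (k - p.length) := by
  simp [catC, Nat.not_lt.mpr h]

lemma catC_ofFn (w : ℕ → Bool) (n : ℕ) :
    catC (List.ofFn fun i : Fin n => w i) (fun k => w (k + n)) = w := by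
  funext k
  rcases lt_or_ge k n with hk | hk
  · rw [catC_apply_of_lt (by simpa using hk)]
    simp
  · rw [catC_apply_of_le (by simpa using hk)]
    simp [Nat.sub_add_cancel hk]

lemma eq_of_catC_eq (hl : p.length = q.length) (h : catC p u = catC q u') : p = q :=
  List.ext_getElem hl fun k hp hq => by
    rw [← catC_apply_of_lt (u := u) hp, ← catC_apply_of_lt (u := u') hq, h]

lemma catC_singleton_apply_zero (a : Bool) (u : ℕ → Bool) : catC [a] u 0 = a := rfl

end catC

lemma maxPrefixCode_setOf_length (n : ℕ) : MaxPrefixCode {l : List Bool | l.length = n} :=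
  ⟨List.finite_length_eq Bool n, fun _ hp _ hq hpq => hpq.eq_of_length (hp.trans hq.symm),
    fun w => ⟨_, List.length_ofFn, _, (catC_ofFn w n).symm⟩⟩

lemma pFixV_iff {a : Bool} {g : (ℕ → Bool) → ℕ → Bool} :
    pFixV a g ↔ ∀ w : ℕ → Bool, w 0 = a → g w = w := by
  refine ⟨fun h w hw => ?_, fun h u => h _ (catC_singleton_apply_zero a u)⟩
  have hw' : w = catC [a] fun k => w (k + 1) := by
    simpa [hw] using (catC_ofFn w 1).symm
  rw [hw']
  exact h _

def IsPrefixLocal (n : ℕ) (h : (ℕ → Bool) → ℕ → Bool) : Prop :=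
  (∀ w k, n ≤ k → h w k = w k) ∧
    ∀ w w', (∀ i < n, w i = w' i) → ∀ i < n, h w i = h w' i

def prefixTable (n : ℕ) (h : (ℕ → Bool) → ℕ → Bool) (p : List Bool) : List Bool :=
  List.ofFn fun i : Fin n => h (catC p fun _ => false) i

section IsPrefixLocal

variable {n : ℕ} {h : (ℕ → Bool) → ℕ → Bool}

@[simp]
lemma length_prefixTable (p : List Bool) : (prefixTable n h p).length = n := List.length_ofFn

lemma IsPrefixLocal.apply_catC (hh : IsPrefixLocal n h) {p : List Bool} (hp : p.length = n)
    (u : ℕ → Bool) : h (catC p u) = catC (prefixTable n h p) u := by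
  funext k
  rcases lt_or_ge k n with hk | hk
  · rw [catC_apply_of_lt (by simpa using hk)]
    simp only [prefixTable, List.getElem_ofFn]
    refine hh.2 _ _ (fun i hi => ?_) k hk
    rw [catC_apply_of_lt (hp ▸ hi), catC_apply_of_lt (hp ▸ hi)]
  · rw [hh.1 _ _ hk, catC_apply_of_le (hp ▸ hk), catC_apply_of_le (by simpa using hk)]
    simp [hp]

lemma inV_of_bijective_of_isPrefixLocal (hbij : Bijective h) (hh : IsPrefixLocal n h) :
    InV h := by
  refine ⟨hbij, _, _, maxPrefixCode_setOf_length n, maxPrefixCode_setOf_length n,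
    prefixTable n h, ⟨fun p _ => length_prefixTable p, fun p hp q hq hpq => ?_, fun q hq => ?_⟩,
    fun p hp => hh.apply_catC hp⟩
  · refine eq_of_catC_eq (hp.trans hq.symm) (u := fun _ => false) (u' := fun _ => false)
      (hbij.1 ?_)
    rw [hh.apply_catC hp, hh.apply_catC hq, hpq]
  · obtain ⟨w, hw⟩ := hbij.2 (catC q fun _ => false)
    refine ⟨List.ofFn fun i : Fin n => w i, List.length_ofFn,
      eq_of_catC_eq (u := fun k => w (k + n)) (u' := fun _ => false)
        ((length_prefixTable _).trans hq.symm) ?_⟩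
    rw [← hh.apply_catC List.length_ofFn, catC_ofFn, hw]

end IsPrefixLocal

def cylinderFlip (v : ℕ → Bool) (n : ℕ) (w : ℕ → Bool) : ℕ → Bool :=
  if ∀ i < n, w i = v i then update w n (!w n) else w

section cylinderFlip

variable {v w : ℕ → Bool} {n : ℕ}

lemma cylinderFlip_of_not_agree (h : ¬ ∀ i < n, w i = v i) : cylinderFlip v n w = w :=
  if_neg h

lemma cylinderFlip_of_agree (h : ∀ i < n, w i = v i) :
    cylinderFlip v n w = update w n (!w n) :=
  if_pos h

lemma cylinderFlip_apply_of_ne {k : ℕ} (hk : k ≠ n) : cylinderFlip v n w k = w k := by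
  unfold cylinderFlip
  split_ifs <;> simp [hk]

lemma cylinderFlip_self_ne : cylinderFlip v n v ≠ v := by
  intro h
  have := congrFun h n
  simp [cylinderFlip] at this

lemma cylinderFlip_involutive (v : ℕ → Bool) (n : ℕ) : Involutive (cylinderFlip v n) := by
  intro w
  by_cases hw : ∀ i < n, w i = v i
  · have hw' : ∀ i < n, cylinderFlip v n w i = v i := fun i hi =>
      (cylinderFlip_apply_of_ne hi.ne).trans (hw i hi)
    rw [cylinderFlip_of_agree hw', cylinderFlip_of_agree hw]
    simp
  · rw [cylinderFlip_of_not_agree hw, cylinderFlip_of_not_agree hw]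

lemma isPrefixLocal_cylinderFlip (v : ℕ → Bool) (n : ℕ) :
    IsPrefixLocal (n + 1) (cylinderFlip v n) := by
  refine ⟨fun w k hk => cylinderFlip_apply_of_ne (by omega), fun w w' hww' i hi => ?_⟩
  have hagree : (∀ j < n, w j = v j) ↔ ∀ j < n, w' j = v j :=
    forall₂_congr fun j hj => by rw [hww' j (by omega)]
  by_cases hw : ∀ j < n, w j = v j
  · rw [cylinderFlip_of_agree hw, cylinderFlip_of_agree (hagree.1 hw)]
    simp [update_apply, hww' i hi, hww' n n.lt_succ_self]
  · rw [cylinderFlip_of_not_agree hw, cylinderFlip_of_not_agree (mt hagree.2 hw), hww' i hi]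

lemma inV_cylinderFlip (v : ℕ → Bool) (n : ℕ) : InV (cylinderFlip v n) :=
  inV_of_bijective_of_isPrefixLocal (cylinderFlip_involutive v n).bijective
    (isPrefixLocal_cylinderFlip v n)

lemma pFixV_cylinderFlip {a : Bool} (hv : v 0 ≠ a) (hn : 0 < n) :
    pFixV a (cylinderFlip v n) :=
  pFixV_iff.2 fun _ hw => cylinderFlip_of_not_agree fun h => hv (hw ▸ (h 0 hn).symm)

end cylinderFlip

lemma comp_comm_of_pFixV_of_pFixV {f g : (ℕ → Bool) → ℕ → Bool} (hf : Bijective f)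
    (hg : Bijective g) (hf1 : pFixV true f) (hg0 : pFixV false g) : g ∘ f = f ∘ g := by
  have hdisj : Equiv.Perm.Disjoint (Equiv.ofBijective g hg) (Equiv.ofBijective f hf) := fun w => by
    cases hw : w 0
    · exact Or.inl (pFixV_iff.1 hg0 w hw)
    · exact Or.inr (pFixV_iff.1 hf1 w hw)
  exact congrArg DFunLike.coe hdisj.commute.eq

end Thompson

open Thompson in
/-- The commutation test: `g ∈ pFix_V(0)` iff `g` commutes with every element
of `pFix_V(1)`. -/
theorem commutation_test (g : (ℕ → Bool) → (ℕ → Bool)) (hg : InV g) :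
    pFixV false g ↔
      ∀ f : (ℕ → Bool) → (ℕ → Bool), InV f → pFixV true f →
        g ∘ f = f ∘ g := by
  refine ⟨fun hg0 f hf hf1 => comp_comm_of_pFixV_of_pFixV hf.1 hg.1 hf1 hg0, fun h => ?_⟩
  refine pFixV_iff.2 fun w hw => by_contra fun hne => ?_
  obtain ⟨m, hm⟩ := Function.ne_iff.1 hne
  let f := cylinderFlip w (m + 1)
  have hf1 : pFixV true f := pFixV_cylinderFlip (by simp [hw]) m.succ_pos
  have hfgw : f (g w) = g w :=
    cylinderFlip_of_not_agree fun hagree => hm (hagree m m.lt_succ_self)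
  have hfw : f w = w := hg.1.1 <| (congrFun (h f (inV_cylinderFlip w (m + 1)) hf1) w).trans hfgw
  exact cylinderFlip_self_ne hfw
end
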